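/- Let H be a (k,l)-edge-maximal r-uniform hypergraph with n ≥ l ≥ t+1, k, r ≥ 2, where t is the largest integer with C(t-1,r-1) ≤ k. If X is a nonempty proper subset of V(H) with |E_H(X)| = k and r ≤ |X| ≤ l-1, then the induced subhypergraph H[X] is a complete r-uniform hypergraph and |X| ≥ t. -/

import Mathlib

/-- The set of edges of `E` crossing the cut `(X, S \ X)` inside ground set `S`. -/
def cutEdges {V : Type*} [DecidableEq V] (E : Finset (Finset V)) (S X : Finset V) :
    Finset (Finset V) :=
  E.filter fun e => (e ∩ X).Nonempty ∧ (e ∩ (S \ X)).Nonempty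

/-- `E` is the edge set of a `(k,l)`-edge-maximal `r`-uniform hypergraph on vertex set `W`:
every subhypergraph on at least `l` vertices has edge-connectivity at most `k`, and
adding any missing `r`-subset of `W` creates a subhypergraph on at least `l` vertices
with edge-connectivity at least `k + 1`. -/
def IsKLEdgeMaximal {V : Type*} [DecidableEq V] (r k l : ℕ) (W : Finset V)
    (E : Finset (Finset V)) : Prop :=
  (∀ e ∈ E, e.card = r ∧ e ⊆ W) ∧
  (∀ S ⊆ W, ∀ E' ⊆ E, (∀ e ∈ E', e ⊆ S) → l ≤ S.card →
    ∃ X ⊆ S, X.Nonempty ∧ (S \ X).Nonempty ∧ (cutEdges E' S X).card ≤ k) ∧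
  (∀ e : Finset V, e ⊆ W → e.card = r → e ∉ E →
    ∃ S ⊆ W, ∃ E' ⊆ insert e E, (∀ f ∈ E', f ⊆ S) ∧ l ≤ S.card ∧
      ∀ X ⊆ S, X.Nonempty → (S \ X).Nonempty → k + 1 ≤ (cutEdges E' S X).card)

/-!
If a missing `r`-subset `e ⊆ X` were added, maximality would give a `(k+1)`-edge-connected
subhypergraph `(S, E')` on at least `l > |X|` vertices containing `e`; then `X ∩ S` is a proper
cut of it, crossed only by the `k` edges of `E_H(X)` because `e` lies inside `X`.

For the bound, suppose `C(|X|, r-1) ≤ k`. There are at least `C(n-1, r-1) > k` crossing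
`r`-sets, so a missing crossing `e` exists, and for its `(S, E')` the cut at `X ∩ S` consists of
exactly the `k + 1` edges of `E_H(X) + e`. The same count through a single vertex shows that every
vertex has degree at least `k > C(|X|-1, r-1)` in `H`, so no vertex of `X` can avoid `S`. Summing
the singleton cuts of `(S, E')` over `X` now gives
`|X| (k+1) ≤ |X| C(|X|-1, r-1) + (r-1)(k+1) = C(|X|, r-1) (|X|-r+1) + (r-1)(k+1)`,
impossible when `C(|X|, r-1) ≤ k` and `|X| ≥ r`.
-/

open Finset

theorem choose_pred_lt_choose {m r : ℕ} (hr : 2 ≤ r) (hrm : r ≤ m) :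
    (m - 1).choose (r - 1) < m.choose (r - 1) := by
  obtain ⟨m, rfl⟩ : ∃ m', m = m' + 1 := ⟨m - 1, by omega⟩
  obtain ⟨r, rfl⟩ : ∃ r', r = r' + 2 := ⟨r - 2, by omega⟩
  rw [show r + 2 - 1 = r + 1 by omega, Nat.choose_succ_succ', Nat.add_sub_cancel]
  have := Nat.choose_pos (show r ≤ m by omega)
  omega

theorem mul_choose_pred_add_lt {m r k : ℕ} (hr : 1 ≤ r) (hrm : r ≤ m)
    (hk : m.choose (r - 1) ≤ k) :
    m * (m - 1).choose (r - 1) + (r - 1) * (k + 1) < m * (k + 1) := by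
  obtain ⟨m, rfl⟩ : ∃ m', m = m' + 1 := ⟨m - 1, by omega⟩
  obtain ⟨r, rfl⟩ : ∃ r', r = r' + 1 := ⟨r - 1, by omega⟩
  simp only [Nat.add_sub_cancel] at hk ⊢
  have hid : (m + 1) * m.choose r = (m + 1).choose r * (m + 1 - r) := by
    rw [Nat.add_one_mul_choose_eq, Nat.choose_succ_right_eq]
  have := Nat.mul_le_mul_right (m + 1 - r) hk
  obtain ⟨a, rfl⟩ : ∃ a, m = r + a := ⟨m - r, by omega⟩
  rw [show r + a + 1 - r = a + 1 by omega] at hid this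
  nlinarith

section Hypergraph

variable {V : Type*} [DecidableEq V]

theorem card_filter_mem_powersetCard {W : Finset V} {u : V} (hu : u ∈ W) {r : ℕ} (hr : 1 ≤ r) :
    #{s ∈ W.powersetCard r | u ∈ s} = (#W - 1).choose (r - 1) := by
  simpa [singleton_subset_iff] using
    card_filter_powersetCard_subset {u} W r (singleton_subset_iff.2 hu) (by simpa using hr)

theorem card_le_choose_of_subset_of_mem {A : Finset (Finset V)} {X : Finset V} {u : V} {r : ℕ}
    (hA : ∀ f ∈ A, #f = r ∧ f ⊆ X) (hu : ∀ f ∈ A, u ∈ f) :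
    #A ≤ (#X - 1).choose (r - 1) := by
  obtain rfl | ⟨f, hf⟩ := A.eq_empty_or_nonempty
  · simp
  have hr : 1 ≤ r := (hA f hf).1 ▸ card_pos.2 ⟨u, hu f hf⟩
  rw [← card_filter_mem_powersetCard ((hA f hf).2 (hu f hf)) hr]
  exact card_le_card fun g hg => mem_filter.2 ⟨mem_powersetCard.2 ⟨(hA g hg).2, (hA g hg).1⟩, hu g hg⟩

theorem choose_le_card_cutEdges_powersetCard {W X : Finset V} {u v : V} (hXW : X ⊆ W)
    (hu : u ∈ X) (hv : v ∈ W) (hvX : v ∉ X) {r : ℕ} (hr : 2 ≤ r) :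
    (#W - 1).choose (r - 1) ≤ #(cutEdges (W.powersetCard r) W X) := by
  rw [← card_erase_of_mem (hXW hu), ← card_powersetCard]
  -- An `(r - 1)`-set avoiding `u` is completed to a crossing `r`-set by `v` if it lies in `X`,
  -- and by `u` otherwise.
  refine card_le_card_of_injOn (fun g => if g ⊆ X then insert v g else insert u g) ?_ ?_
  · intro g hg
    obtain ⟨hgW, hgr⟩ := mem_powersetCard.1 hg
    have hug : u ∉ g := fun h => (mem_erase.1 (hgW h)).1 rfl
    have hgW : g ⊆ W := hgW.trans (erase_subset u W)
    simp only [coe_filter, cutEdges, Set.mem_ofPred_eq, mem_powersetCard]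
    split_ifs with hgX
    · obtain ⟨x, hx⟩ := card_pos.1 (by omega : 0 < #g)
      refine ⟨⟨insert_subset hv hgW, ?_⟩, ⟨x, ?_⟩, ⟨v, ?_⟩⟩
      · rw [card_insert_of_notMem fun h => hvX (hgX h)]; omega
      · simp [hx, hgX hx]
      · simp [hv, hvX]
    · obtain ⟨x, hxg, hxX⟩ := not_subset.1 hgX
      refine ⟨⟨insert_subset (hXW hu) hgW, ?_⟩, ⟨u, ?_⟩, ⟨x, ?_⟩⟩
      · rw [card_insert_of_notMem hug]; omega
      · simp [hu]
      · simp [hxg, hxX, hgW hxg]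
  · intro g hg g' hg' h
    have hug : u ∉ g := fun h => (mem_erase.1 ((mem_powersetCard.1 hg).1 h)).1 rfl
    have hug' : u ∉ g' := fun h => (mem_erase.1 ((mem_powersetCard.1 hg').1 h)).1 rfl
    have huv : u ≠ v := fun h => hvX (h ▸ hu)
    simp only at h
    split_ifs at h with hgX hgX' hgX'
    · rw [← erase_insert fun h => hvX (hgX h), h, erase_insert fun h => hvX (hgX' h)]
    · exact ((mem_insert.1 (h.symm ▸ mem_insert_self u g')).elim huv hug).elim
    · exact ((mem_insert.1 (h ▸ mem_insert_self u g)).elim huv hug').elim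
    · rw [← erase_insert hug, h, erase_insert hug']

theorem cutEdges_inter_subset {E' E : Finset (Finset V)} (hE : E' ⊆ E) {S W : Finset V}
    (hSW : S ⊆ W) (X : Finset V) : cutEdges E' S (X ∩ S) ⊆ cutEdges E W X := by
  intro f hf
  simp only [cutEdges, mem_filter, sdiff_inter_self_right] at hf ⊢
  obtain ⟨hfE, ⟨x, hx⟩, ⟨y, hy⟩⟩ := hf
  exact ⟨hE hfE, ⟨x, by simp_all⟩, ⟨y, by simp_all [hSW (mem_sdiff.1 (mem_inter.1 hy).2).1]⟩⟩

theorem card_cutEdges_insert_le (e : Finset V) (E : Finset (Finset V)) (W X : Finset V) :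
    #(cutEdges (insert e E) W X) ≤ #(cutEdges E W X) + 1 := by
  unfold cutEdges
  rw [filter_insert]
  split_ifs
  exacts [card_insert_le _ _, Nat.le_succ _]

theorem cutEdges_insert_of_subset {e X : Finset V} (heX : e ⊆ X) (E : Finset (Finset V))
    (W : Finset V) : cutEdges (insert e E) W X = cutEdges E W X := by
  unfold cutEdges
  rw [filter_insert, if_neg]
  rintro ⟨-, x, hx⟩
  simp_all [(mem_sdiff.1 (mem_inter.1 hx).2).2 (heX (mem_inter.1 hx).1)]

theorem card_cutEdges_singleton_le {E : Finset (Finset V)} {S X : Finset V} {r : ℕ}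
    (hE : ∀ f ∈ E, #f = r ∧ f ⊆ S) {u : V} (hu : u ∈ X) :
    #(cutEdges E S {u}) ≤ (#X - 1).choose (r - 1) + #{f ∈ cutEdges E S X | u ∈ f} := by
  have hsplit : cutEdges E S {u} ⊆ {f ∈ E | u ∈ f ∧ f ⊆ X} ∪ {f ∈ cutEdges E S X | u ∈ f} := by
    intro f hf
    obtain ⟨hfE, ⟨x, hx⟩, -⟩ := mem_filter.1 hf
    obtain rfl : x = u := mem_singleton.1 (mem_inter.1 hx).2
    simp only [mem_union, mem_filter, cutEdges]
    by_cases hfX : f ⊆ X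
    · exact .inl ⟨hfE, (mem_inter.1 hx).1, hfX⟩
    · obtain ⟨y, hyf, hyX⟩ := not_subset.1 hfX
      exact .inr ⟨⟨hfE, ⟨x, by simp_all⟩, ⟨y, by simp_all [(hE f hfE).2 hyf]⟩⟩, (mem_inter.1 hx).1⟩
  refine (card_le_card hsplit).trans ((card_union_le _ _).trans (Nat.add_le_add_right ?_ _))
  exact card_le_choose_of_subset_of_mem (fun f hf => ⟨(hE f (mem_filter.1 hf).1).1,
    (mem_filter.1 hf).2.2⟩) fun f hf => (mem_filter.1 hf).2.1

theorem sum_card_filter_mem_cutEdges_le {E : Finset (Finset V)} {S X : Finset V} {r : ℕ}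
    (hE : ∀ f ∈ E, #f = r ∧ f ⊆ S) :
    ∑ u ∈ X, #{f ∈ cutEdges E S X | u ∈ f} ≤ (r - 1) * #(cutEdges E S X) := by
  have hswap : ∑ u ∈ X, #{f ∈ cutEdges E S X | u ∈ f} = ∑ f ∈ cutEdges E S X, #(X ∩ f) := by
    simp_rw [← filter_mem_eq_inter, card_eq_sum_ones, sum_filter]
    exact sum_comm
  rw [hswap, mul_comm, ← smul_eq_mul, ← sum_const]
  refine sum_le_sum fun f hf => ?_
  obtain ⟨hfE, -, ⟨y, hy⟩⟩ := mem_filter.1 hf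
  obtain ⟨hyf, hyS⟩ := mem_inter.1 hy
  calc #(X ∩ f) ≤ #(f.erase y) :=
        card_le_card fun x hx => mem_erase.2 ⟨fun h => (mem_sdiff.1 hyS).2 (h ▸ (mem_inter.1 hx).1),
          (mem_inter.1 hx).2⟩
    _ = r - 1 := by rw [card_erase_of_mem hyf, (hE f hfE).1]

theorem card_mul_le_of_le_card_cutEdges_singleton {E : Finset (Finset V)} {S X : Finset V}
    {r c : ℕ} (hE : ∀ f ∈ E, #f = r ∧ f ⊆ S) (hc : ∀ u ∈ X, c ≤ #(cutEdges E S {u})) :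
    #X * c ≤ #X * (#X - 1).choose (r - 1) + (r - 1) * #(cutEdges E S X) :=
  calc #X * c = ∑ u ∈ X, c := by rw [sum_const, smul_eq_mul]
    _ ≤ ∑ u ∈ X, ((#X - 1).choose (r - 1) + #{f ∈ cutEdges E S X | u ∈ f}) :=
        sum_le_sum fun u hu => (hc u hu).trans (card_cutEdges_singleton_le hE hu)
    _ ≤ _ := by
        rw [sum_add_distrib, sum_const, smul_eq_mul]
        exact Nat.add_le_add_left (sum_card_filter_mem_cutEdges_le hE) _

theorem lt_choose_card_of_le_card_cutEdges_singleton {E : Finset (Finset V)} {S X : Finset V}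
    {r k : ℕ} (hE : ∀ f ∈ E, #f = r ∧ f ⊆ S) (hr : 1 ≤ r) (hrX : r ≤ #X)
    (hdeg : ∀ u ∈ X, k + 1 ≤ #(cutEdges E S {u})) (hcut : #(cutEdges E S X) ≤ k + 1) :
    k < (#X).choose (r - 1) := by
  by_contra! hXk
  have := card_mul_le_of_le_card_cutEdges_singleton hE hdeg
  have := Nat.mul_le_mul_left (r - 1) hcut
  have := mul_choose_pred_add_lt hr hrX hXk
  omega

theorem subset_of_forall_cutEdges_subset {E : Finset (Finset V)} {W X S : Finset V} {r : ℕ}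
    (hE : ∀ f ∈ E, #f = r ∧ f ⊆ W) (hcutS : ∀ f ∈ cutEdges E W X, f ⊆ S)
    (hdeg : ∀ u ∈ X, (#X - 1).choose (r - 1) < #{f ∈ E | u ∈ f}) : X ⊆ S := by
  intro u hu
  by_contra huS
  refine (hdeg u hu).not_ge (card_le_choose_of_subset_of_mem (fun f hf => ?_) fun f hf =>
    (mem_filter.1 hf).2)
  obtain ⟨hfE, huf⟩ := mem_filter.1 hf
  refine ⟨(hE f hfE).1, fun y hyf => ?_⟩
  by_contra hyX
  exact huS (hcutS f (mem_filter.2 ⟨hfE, ⟨u, mem_inter.2 ⟨huf, hu⟩⟩,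
    ⟨y, mem_inter.2 ⟨hyf, mem_sdiff.2 ⟨(hE f hfE).2 hyf, hyX⟩⟩⟩⟩) huf)

end Hypergraph

namespace IsKLEdgeMaximal

variable {V : Type*} [DecidableEq V] {r k l : ℕ} {W : Finset V} {E : Finset (Finset V)}

theorem exists_of_notMem (hmax : IsKLEdgeMaximal r k l W E) {e : Finset V} (heW : e ⊆ W)
    (he : #e = r) (heE : e ∉ E) :
    ∃ S ⊆ W, ∃ E' ⊆ insert e E, e ∈ E' ∧ (∀ f ∈ E', #f = r ∧ f ⊆ S) ∧ l ≤ #S ∧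
      ∀ Y ⊆ S, Y.Nonempty → (S \ Y).Nonempty → k + 1 ≤ #(cutEdges E' S Y) := by
  obtain ⟨S, hSW, E', hE', hE'S, hlS, hconn⟩ := hmax.2.2 e heW he heE
  have hE'r : ∀ f ∈ E', #f = r ∧ f ⊆ S := fun f hf =>
    ⟨(mem_insert.1 (hE' hf)).elim (· ▸ he) fun h => (hmax.1 f h).1, hE'S f hf⟩
  refine ⟨S, hSW, E', hE', ?_, hE'r, hlS, hconn⟩
  by_contra heE'
  have hE'E : E' ⊆ E := fun f hf =>
    (mem_insert.1 (hE' hf)).resolve_left fun h => heE' (h ▸ hf)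
  obtain ⟨Y, hYS, hY, hSY, hcut⟩ := hmax.2.1 S hSW E' hE'E hE'S hlS
  exact absurd (hconn Y hYS hY hSY) (by omega)

theorem le_card_filter_mem (hmax : IsKLEdgeMaximal r k l W E) (hr : 1 ≤ r) (hl : 2 ≤ l)
    (hW : k < (#W - 1).choose (r - 1)) {u : V} (hu : u ∈ W) : k ≤ #{f ∈ E | u ∈ f} := by
  by_contra! hdeg
  obtain ⟨e, he, heE⟩ : ∃ e ∈ {s ∈ W.powersetCard r | u ∈ s}, e ∉ {f ∈ E | u ∈ f} :=
    exists_mem_notMem_of_card_lt_card (by rw [card_filter_mem_powersetCard hu hr]; omega)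
  simp only [mem_filter, mem_powersetCard] at he
  obtain ⟨⟨heW, her⟩, hue⟩ := he
  obtain ⟨S, hSW, E', hE', heE', hE'S, hlS, hconn⟩ :=
    hmax.exists_of_notMem heW her fun h => heE (mem_filter.2 ⟨h, hue⟩)
  have huS : u ∈ S := (hE'S e heE').2 hue
  have hcut := hconn {u} (singleton_subset_iff.2 huS) (singleton_nonempty u)
    (sdiff_nonempty.2 fun h => (card_le_card h).not_gt (by rw [card_singleton]; omega))
  have hsub := card_le_card (cutEdges_inter_subset hE' hSW {u})
  rw [singleton_inter_of_mem huS] at hsub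
  have hdeg' : cutEdges E W {u} ⊆ {f ∈ E | u ∈ f} := fun f hf => by
    obtain ⟨hfE, ⟨x, hx⟩, -⟩ := mem_filter.1 hf
    exact mem_filter.2 ⟨hfE, mem_singleton.1 (mem_inter.1 hx).2 ▸ (mem_inter.1 hx).1⟩
  have := card_le_card hdeg'
  have := card_cutEdges_insert_le e E W {u}
  omega

theorem mem_of_subset (hmax : IsKLEdgeMaximal r k l W E) (hr : 1 ≤ r) {X : Finset V}
    (hXW : X ⊆ W) (hXl : #X < l) (hcut : #(cutEdges E W X) ≤ k) {e : Finset V} (heX : e ⊆ X)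
    (he : #e = r) : e ∈ E := by
  by_contra heE
  obtain ⟨S, hSW, E', hE', heE', hE'S, hlS, hconn⟩ :=
    hmax.exists_of_notMem (heX.trans hXW) he heE
  obtain ⟨x, hx⟩ := card_pos.1 (he ▸ hr : 0 < #e)
  have hconnX := hconn (X ∩ S) inter_subset_right ⟨x, mem_inter.2 ⟨heX hx, (hE'S e heE').2 hx⟩⟩
    (sdiff_nonempty.2 fun h => (card_le_card h).not_gt
      ((card_le_card inter_subset_left).trans_lt (hXl.trans_le hlS)))
  have hsub := card_le_card (cutEdges_inter_subset hE' hSW X)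
  rw [cutEdges_insert_of_subset heX] at hsub
  omega

theorem lt_choose_card (hmax : IsKLEdgeMaximal r k l W E) (hr : 2 ≤ r)
    (hW : k < (#W - 1).choose (r - 1)) {X : Finset V} (hXW : X ⊆ W) {v : V} (hv : v ∈ W)
    (hvX : v ∉ X) (hcut : #(cutEdges E W X) ≤ k) (hrX : r ≤ #X) (hXl : #X < l) :
    k < (#X).choose (r - 1) := by
  by_contra! hXk
  obtain ⟨u, hu⟩ : X.Nonempty := card_pos.1 (by omega)
  obtain ⟨e, he, heX⟩ : ∃ e ∈ cutEdges (W.powersetCard r) W X, e ∉ cutEdges E W X :=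
    exists_mem_notMem_of_card_lt_card
      (hcut.trans_lt (hW.trans_le (choose_le_card_cutEdges_powersetCard hXW hu hv hvX hr)))
  obtain ⟨he, hcross⟩ := mem_filter.1 he
  obtain ⟨heW, her⟩ := mem_powersetCard.1 he
  obtain ⟨S, hSW, E', hE', heE', hE'S, hlS, hconn⟩ :=
    hmax.exists_of_notMem heW her fun h => heX (mem_filter.2 ⟨h, hcross⟩)
  have hSX : ∀ {Y : Finset V}, Y ⊆ X → (S \ Y).Nonempty := fun hY =>
    sdiff_nonempty.2 fun h => (card_le_card h).not_gt
      ((card_le_card hY).trans_lt (hXl.trans_le hlS))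
  -- Adding `e` to the cut of `X` gives at most `k + 1` edges, which the cut of `X ∩ S` in the
  -- `(k + 1)`-edge-connected `(S, E')` must all use.
  have hF : cutEdges E' S (X ∩ S) = cutEdges (insert e E) W X := by
    refine eq_of_subset_of_card_le (cutEdges_inter_subset hE' hSW X) ?_
    obtain ⟨x, hx⟩ := hcross.1
    have := hconn (X ∩ S) inter_subset_right
      ⟨x, mem_inter.2 ⟨(mem_inter.1 hx).2, (hE'S e heE').2 (mem_inter.1 hx).1⟩⟩
      (hSX inter_subset_left)
    have := card_cutEdges_insert_le e E W X
    omega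
  have hXS : X ⊆ S := by
    refine subset_of_forall_cutEdges_subset hmax.1 (fun f hf => ?_) fun u hu => ?_
    · have hf' : f ∈ cutEdges E' S (X ∩ S) := hF ▸ filter_subset_filter _ (subset_insert e E) hf
      exact (hE'S f (mem_filter.1 hf').1).2
    · exact (choose_pred_lt_choose hr hrX).trans_le
        (hXk.trans (hmax.le_card_filter_mem (by omega) (by omega) hW (hXW hu)))
  rw [inter_eq_left.2 hXS] at hF
  refine hXk.not_gt (lt_choose_card_of_le_card_cutEdges_singleton hE'S (by omega) hrX
    (fun u hu => ?_) (hF ▸ (card_cutEdges_insert_le e E W X).trans (by omega)))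
  exact hconn {u} (singleton_subset_iff.2 (hXS hu)) (singleton_nonempty u)
    (hSX (singleton_subset_iff.2 hu))

end IsKLEdgeMaximal

theorem stmt_14_general (n k l r t : ℕ) (hr : 2 ≤ r)
    (ht1 : (t - 1).choose (r - 1) ≤ k) (ht2 : k < t.choose (r - 1))
    (hl : t + 1 ≤ l) (hln : l ≤ n)
    (E : Finset (Finset (Fin n)))
    (hmax : IsKLEdgeMaximal r k l Finset.univ E)
    (X : Finset (Fin n)) (hXprop : X ≠ Finset.univ)
    (hcut : (cutEdges E Finset.univ X).card = k)
    (hX1 : r ≤ X.card) (hX2 : X.card ≤ l - 1) :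
    (∀ e : Finset (Fin n), e.card = r → e ⊆ X → e ∈ E) ∧ t ≤ X.card := by
  have hXl : #X < l := by omega
  refine ⟨fun e he heX => hmax.mem_of_subset (by omega) (subset_univ X) hXl hcut.le heX he, ?_⟩
  have hW : k < (#(univ : Finset (Fin n)) - 1).choose (r - 1) := by
    rw [card_univ, Fintype.card_fin]
    exact ht2.trans_le (Nat.choose_le_choose _ (by omega))
  obtain ⟨v, hvX⟩ : ∃ v, v ∉ X := by simpa [eq_univ_iff_forall] using hXprop
  have hk := hmax.lt_choose_card hr hW (subset_univ X) (mem_univ v) hvX hcut.le hX1 hXl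
  by_contra! hXt
  exact (hk.trans_le ((Nat.choose_le_choose _ (by omega)).trans ht1)).false

theorem stmt_14 (n k l r t : ℕ) (hk : 2 ≤ k) (hr : 2 ≤ r)
    (ht1 : (t - 1).choose (r - 1) ≤ k) (ht2 : k < t.choose (r - 1))
    (hl : t + 1 ≤ l) (hln : l ≤ n)
    (E : Finset (Finset (Fin n)))
    (hmax : IsKLEdgeMaximal r k l Finset.univ E)
    (X : Finset (Fin n)) (hXne : X.Nonempty) (hXprop : X ≠ Finset.univ)
    (hcut : (cutEdges E Finset.univ X).card = k)
    (hX1 : r ≤ X.card) (hX2 : X.card ≤ l - 1) :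
    (∀ e : Finset (Fin n), e.card = r → e ⊆ X → e ∈ E) ∧ t ≤ X.card :=
  stmt_14_general n k l r t hr ht1 ht2 hl hln E hmax X hXprop hcut hX1 hX2
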